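/- arXiv:2002.02361 — 7 statements merged into one kernel-verified Lean document; each statement's English description precedes it below -/
import Mathlib

section
/- Let f : ℝ^n → ℝ^n and let S ⊆ ℝ^n be a set whose interior is nonempty (in particular S contains two distinct points). If f is quadratically inner-bounded on S with constants γ_q1, γ_q2 ∈ ℝ, then necessarily 2·γ_q1 + γ_q2² ≥ 0. -/
open RealInnerProductSpace

/-- If `f` is quadratically inner-bounded on a set `S ⊆ ℝ^n` with nonempty interior
(in particular `S` contains two distinct points), then `2·γ_q1 + γ_q2² ≥ 0`. -/
theorem qib_constants_necessary_condition
    (n : ℕ) (hn : 0 < n)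
    (f : EuclideanSpace ℝ (Fin n) → EuclideanSpace ℝ (Fin n))
    (S : Set (EuclideanSpace ℝ (Fin n))) (hS : (interior S).Nonempty)
    (γq1 γq2 : ℝ)
    (hQIB : ∀ x ∈ S, ∀ y ∈ S,
      ‖f x - f y‖ ^ 2 ≤ γq1 * ‖x - y‖ ^ 2 + γq2 * ⟪f x - f y, x - y⟫) :
    2 * γq1 + γq2 ^ 2 ≥ 0 := by
  obtain ⟨x, hx⟩ := hS
  obtain ⟨ε, hε, hball⟩ := Metric.isOpen_iff.mp isOpen_interior x hx
  set v : EuclideanSpace ℝ (Fin n) := EuclideanSpace.single ⟨0, hn⟩ (ε / 2) with hv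
  have hvnorm : ‖v‖ = ε / 2 := by
    rw [hv, EuclideanSpace.norm_single]
    rw [Real.norm_eq_abs, abs_of_pos (by linarith)]
  have hy : x + v ∈ S := by
    apply interior_subset
    apply hball
    simp only [Metric.mem_ball, dist_eq_norm, add_sub_cancel_left]
    rw [hvnorm]; linarith
  have hxS : x ∈ S := interior_subset hx
  have h := hQIB (x + v) hy x hxS
  have hsub : x + v - x = v := by abel
  rw [hsub] at h
  set g := f (x + v) - f x with hg
  have hcs : γq2 * ⟪g, v⟫ ≤ |γq2| * (‖g‖ * ‖v‖) := by
    calc γq2 * ⟪g, v⟫ ≤ |γq2 * ⟪g, v⟫| := le_abs_self _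
    _ = |γq2| * |⟪g, v⟫| := abs_mul _ _
    _ ≤ |γq2| * (‖g‖ * ‖v‖) := by
        exact mul_le_mul_of_nonneg_left (abs_real_inner_le_norm g v) (abs_nonneg _)
  have hvpos : (0:ℝ) < ‖v‖ := by rw [hvnorm]; linarith
  have hgnn : (0:ℝ) ≤ ‖g‖ := norm_nonneg _
  have key : γq1 + γq2 ^ 2 / 4 ≥ 0 := by
    have habs : |γq2| ^ 2 = γq2 ^ 2 := sq_abs _
    nlinarith [sq_nonneg (‖g‖ - |γq2| * ‖v‖ / 2), sq_nonneg ‖v‖, mul_pos hvpos hvpos]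
  nlinarith [sq_nonneg γq2]
end

section
/- Let f : ℝ^n → ℝ^n and S ⊆ ℝ^n be an arbitrary set. Then f is quadratically inner-bounded on S for some constants γ_q1, γ_q2 ∈ ℝ if and only if f is Lipschitz continuous on S for some constant γ_l ≥ 0. In other words, the class of QIB functions coincides with the class of Lipschitz continuous functions. -/
open RealInnerProductSpace

/-- On an arbitrary set `S ⊆ ℝ^n`, `f` is quadratically inner-bounded for some constants
`γ_q1, γ_q2 ∈ ℝ` if and only if `f` is Lipschitz continuous on `S` for some `γ_l ≥ 0`:
the class of QIB functions coincides with the class of Lipschitz continuous functions. -/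
theorem qib_iff_lipschitz
    (n : ℕ)
    (f : EuclideanSpace ℝ (Fin n) → EuclideanSpace ℝ (Fin n))
    (S : Set (EuclideanSpace ℝ (Fin n))) :
    (∃ γq1 γq2 : ℝ, ∀ x ∈ S, ∀ y ∈ S,
      ‖f x - f y‖ ^ 2 ≤ γq1 * ‖x - y‖ ^ 2 + γq2 * ⟪f x - f y, x - y⟫)
    ↔
    (∃ γl : ℝ, 0 ≤ γl ∧ ∀ x ∈ S, ∀ y ∈ S,
      ‖f x - f y‖ ≤ γl * ‖x - y‖) := by
  constructor
  · rintro ⟨a, b, h⟩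
    refine ⟨Real.sqrt (2 * max a 0 + b ^ 2), Real.sqrt_nonneg _, ?_⟩
    intro x hx y hy
    set t := ‖f x - f y‖ with ht
    set s := ‖x - y‖ with hs
    have ht0 : 0 ≤ t := norm_nonneg _
    have hs0 : 0 ≤ s := norm_nonneg _
    have h1 := h x hx y hy
    have hip : |⟪f x - f y, x - y⟫| ≤ t * s := abs_real_inner_le_norm _ _
    have h2 : b * ⟪f x - f y, x - y⟫ ≤ |b| * (t * s) := by
      calc b * ⟪f x - f y, x - y⟫ ≤ |b * ⟪f x - f y, x - y⟫| := le_abs_self _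
        _ = |b| * |⟪f x - f y, x - y⟫| := abs_mul _ _
        _ ≤ |b| * (t * s) := by
            exact mul_le_mul_of_nonneg_left hip (abs_nonneg _)
    have hb2 : |b| ^ 2 = b ^ 2 := sq_abs b
    have key : t ^ 2 ≤ (2 * max a 0 + b ^ 2) * s ^ 2 := by
      have hmax : a ≤ max a 0 := le_max_left _ _
      nlinarith [sq_nonneg (t - |b| * s), abs_nonneg b, sq_nonneg s, le_max_right a 0]
    have hc : (0:ℝ) ≤ 2 * max a 0 + b ^ 2 := by positivity
    have : t ≤ Real.sqrt (2 * max a 0 + b ^ 2) * s := by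
      have := Real.sqrt_le_sqrt key
      rwa [Real.sqrt_sq ht0, Real.sqrt_mul hc, Real.sqrt_sq hs0] at this
    exact this
  · rintro ⟨γl, hγ, h⟩
    refine ⟨γl ^ 2, 0, ?_⟩
    intro x hx y hy
    have h1 := h x hx y hy
    have := norm_nonneg (f x - f y)
    nlinarith [norm_nonneg (x - y)]
end

section
/- Let Ω ⊆ ℝ^n be a convex set, let f : ℝ^n → ℝ^g be differentiable on Ω (with Fréchet derivative Df(x) : ℝ^n → ℝ^g at each x ∈ Ω), and let G : ℝ^g → ℝ^n be a linear map. Suppose γ̲, γ̄ ∈ ℝ are such that for every x ∈ Ω and every v ∈ ℝ^n: γ̲·‖v‖² ≤ ⟨G(Df(x)(v)), v⟩ ≤ γ̄·‖v‖² (this is exactly the condition that the minimum and maximum eigenvalues of the symmetrized matrix (1/2)(Ξ(x) + Ξ(x)ᵀ), where Ξ(x) is the matrix of G∘Df(x), lie in [γ̲, γ̄]). Then for all x, x̂ ∈ Ω: γ̲·‖x − x̂‖² ≤ ⟨G(f(x) − f(x̂)), x − x̂⟩ ≤ γ̄·‖x − x̂‖². -/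
open RealInnerProductSpace

/-! The map `z ↦ ⟪G (f z), x - y⟫` is real-valued and differentiable on the convex set `Ω`, so the
mean value theorem writes `⟪G (f x - f y), x - y⟫` as `⟪G (Df z (x - y)), x - y⟫` for some `z` on
the segment `[x, y] ⊆ Ω`, where the hypothesis bounds it. -/

theorem Convex.exists_mem_segment_apply_sub_eq_apply_fderiv
    {E F : Type*} [NormedAddCommGroup E] [NormedSpace ℝ E] [NormedAddCommGroup F] [NormedSpace ℝ F]
    {s : Set E} (hs : Convex ℝ s) {f : E → F} {f' : E → E →L[ℝ] F}
    (hf : ∀ z ∈ s, HasFDerivWithinAt f (f' z) s z) (ℓ : F →L[ℝ] ℝ)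
    {x y : E} (hx : x ∈ s) (hy : y ∈ s) :
    ∃ z ∈ segment ℝ x y, ℓ (f x - f y) = ℓ (f' z (x - y)) := by
  obtain ⟨z, hz, heq⟩ :=
    domain_mvt (fun z hz => ℓ.hasFDerivAt.comp_hasFDerivWithinAt z (hf z hz)) hs hy hx
  exact ⟨z, segment_symm ℝ y x ▸ hz, by simpa only [map_sub, Function.comp_apply, ContinuousLinearMap.comp_apply] using heq⟩

/-- If `Ω ⊆ ℝ^n` is convex, `f : ℝ^n → ℝ^g` is differentiable on `Ω` with derivative
`Df x` at each `x ∈ Ω`, `G : ℝ^g → ℝ^n` is linear, and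
`γ̲·‖v‖² ≤ ⟪G (Df x v), v⟫ ≤ γ̄·‖v‖²` for all `x ∈ Ω` and `v ∈ ℝ^n`, then
`γ̲·‖x − y‖² ≤ ⟪G (f x − f y), x − y⟫ ≤ γ̄·‖x − y‖²` for all `x, y ∈ Ω`. -/
theorem osl_bounds_from_jacobian
    (n g : ℕ)
    (Ω : Set (EuclideanSpace ℝ (Fin n))) (hΩ : Convex ℝ Ω)
    (f : EuclideanSpace ℝ (Fin n) → EuclideanSpace ℝ (Fin g))
    (Df : EuclideanSpace ℝ (Fin n) → (EuclideanSpace ℝ (Fin n) →L[ℝ] EuclideanSpace ℝ (Fin g)))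
    (hdf : ∀ x ∈ Ω, HasFDerivWithinAt f (Df x) Ω x)
    (G : EuclideanSpace ℝ (Fin g) →ₗ[ℝ] EuclideanSpace ℝ (Fin n))
    (γlo γhi : ℝ)
    (hbound : ∀ x ∈ Ω, ∀ v : EuclideanSpace ℝ (Fin n),
      γlo * ‖v‖ ^ 2 ≤ ⟪G (Df x v), v⟫ ∧ ⟪G (Df x v), v⟫ ≤ γhi * ‖v‖ ^ 2) :
    ∀ x ∈ Ω, ∀ y ∈ Ω,
      γlo * ‖x - y‖ ^ 2 ≤ ⟪G (f x - f y), x - y⟫ ∧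
      ⟪G (f x - f y), x - y⟫ ≤ γhi * ‖x - y‖ ^ 2 := by
  intro x hx y hy
  obtain ⟨z, hz, hℓ⟩ := hΩ.exists_mem_segment_apply_sub_eq_apply_fderiv hdf
    ((innerSL ℝ (x - y)).comp (LinearMap.toContinuousLinearMap G)) hx hy
  have hmvt : ⟪G (f x - f y), x - y⟫ = ⟪G (Df z (x - y)), x - y⟫ := by
    simpa only [ContinuousLinearMap.comp_apply, innerSL_apply_apply,
      LinearMap.coe_toContinuousLinearMap', real_inner_comm (x - y)] using hℓ
  rw [hmvt]
  exact hbound z (hΩ.segment_subset hx hy hz) (x - y)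
end

section
/- Let Ω ⊆ ℝ^n be a convex set, let f : ℝ^n → ℝ^g be differentiable on Ω, and let G ∈ ℝ^{n×g}. For i = 1, …, n define ξ_i(x) = Σ_{j=1}^{g} G_{(i,j)}·f_j(x), i.e. ξ_i is the i-th component of G·f. Suppose γ̲, γ̄ ∈ ℝ satisfy γ̲·‖v‖² ≤ ⟨G(Df(x)(v)), v⟩ ≤ γ̄·‖v‖² for every x ∈ Ω and v ∈ ℝ^n, and suppose γ_m ∈ ℝ satisfies Σ_{i=1}^{n} ‖∇ξ_i(x)‖² ≤ γ_m for every x ∈ Ω. Then for any ε₁, ε₂ ≥ 0, f is quadratically inner-bounded on Ω with respect to G with constants γ_q1 = ε₁·γ̄ − ε₂·γ̲ + γ_m and γ_q2 = ε₂ − ε₁; that is, for all x, x̂ ∈ Ω: ‖G(f(x) − f(x̂))‖² ≤ γ_q1·‖x − x̂‖² + γ_q2·⟨G(f(x) − f(x̂)), x − x̂⟩. -/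
/-!
With `F = G ∘ f`, the row-wise Cauchy–Schwarz inequality bounds the operator norm of `DF` by the
Frobenius norm `√γm`, so the mean value inequality gives `‖F x - F y‖² ≤ γm ‖x - y‖²`. The mean value
theorem for `t ↦ ⟪F (y + t (x - y)), x - y⟫` gives
`γ̲ ‖x - y‖² ≤ ⟪F x - F y, x - y⟫ ≤ γ̄ ‖x - y‖²`. Adding `ε₁` times the slack in the upper bound
and `ε₂` times the slack in the lower bound to the first estimate yields the claim.
-/

open RealInnerProductSpace Set

theorem ContinuousLinearMap.euclidean_norm_apply_sq_le {ι κ : Type*} [Fintype ι] [DecidableEq ι]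
    [Fintype κ] (A : EuclideanSpace ℝ ι →L[ℝ] EuclideanSpace ℝ κ) (v : EuclideanSpace ℝ ι) :
    ‖A v‖ ^ 2 ≤ (∑ i, ∑ m, A (EuclideanSpace.single m 1) i ^ 2) * ‖v‖ ^ 2 := by
  have hrow : ∀ i, A v i = ∑ m, A (EuclideanSpace.single m 1) i * v m := by
    intro i
    conv_lhs => rw [← (EuclideanSpace.basisFun ι ℝ).sum_repr v]
    simp [mul_comm]
  simp only [EuclideanSpace.real_norm_sq_eq, hrow]
  rw [Finset.sum_mul]
  exact Finset.sum_le_sum fun i _ => Finset.sum_mul_sq_le_sq_mul_sq _ _ _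

theorem ContinuousLinearMap.euclidean_opNorm_le_sqrt {ι κ : Type*} [Fintype ι] [DecidableEq ι]
    [Fintype κ] (A : EuclideanSpace ℝ ι →L[ℝ] EuclideanSpace ℝ κ) {C : ℝ}
    (hA : ∑ i, ∑ m, A (EuclideanSpace.single m 1) i ^ 2 ≤ C) : ‖A‖ ≤ √C := by
  refine A.opNorm_le_bound (Real.sqrt_nonneg _) fun v => ?_
  have hC : 0 ≤ C := le_trans (by positivity) hA
  rw [← Real.sqrt_sq (norm_nonneg (A v)), ← Real.sqrt_sq (norm_nonneg v), ← Real.sqrt_mul hC]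
  exact Real.sqrt_le_sqrt <| (A.euclidean_norm_apply_sq_le v).trans <|
    mul_le_mul_of_nonneg_right hA (sq_nonneg _)

theorem sub_mem_Icc_of_hasDerivWithinAt_unitInterval {φ φ' : ℝ → ℝ} {a b : ℝ}
    (hφ : ∀ t ∈ Icc (0 : ℝ) 1, HasDerivWithinAt φ (φ' t) (Icc 0 1) t)
    (hφ' : ∀ t ∈ Icc (0 : ℝ) 1, φ' t ∈ Icc a b) : φ 1 - φ 0 ∈ Icc a b := by
  -- `φ t - t (a + b) / 2` has derivative of size at most `(b - a) / 2`.
  have hψ : ∀ t ∈ Icc (0 : ℝ) 1, HasDerivWithinAt (fun t => φ t - t * ((a + b) / 2))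
      (φ' t - (a + b) / 2) (Icc 0 1) t := fun t ht =>
    ((hφ t ht).sub ((hasDerivAt_id t).mul_const _).hasDerivWithinAt).congr_deriv (by simp)
  have hbound : ∀ t ∈ Icc (0 : ℝ) 1, ‖φ' t - (a + b) / 2‖ ≤ (b - a) / 2 := by
    intro t ht
    rw [Real.norm_eq_abs, abs_le]
    constructor <;> linarith [(hφ' t ht).1, (hφ' t ht).2]
  have h := (convex_Icc (0 : ℝ) 1).norm_image_sub_le_of_norm_hasDerivWithin_le hψ hbound
    (left_mem_Icc.2 zero_le_one) (right_mem_Icc.2 zero_le_one)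
  simp only [Real.norm_eq_abs, abs_le, sub_zero, norm_one, mul_one, one_mul, zero_mul] at h
  constructor <;> linarith [h.1, h.2]

theorem Convex.inner_sub_mem_Icc_of_hasFDerivWithinAt {E : Type*} [NormedAddCommGroup E]
    [InnerProductSpace ℝ E] {Ω : Set E} (hΩ : Convex ℝ Ω) {F : E → E} {DF : E → E →L[ℝ] E}
    (hF : ∀ z ∈ Ω, HasFDerivWithinAt F (DF z) Ω z) {x y : E} (hx : x ∈ Ω) (hy : y ∈ Ω)
    {a b : ℝ} (hDF : ∀ z ∈ Ω, ⟪DF z (x - y), x - y⟫ ∈ Icc a b) :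
    ⟪F x - F y, x - y⟫ ∈ Icc a b := by
  set u := x - y
  have hL : ∀ t ∈ Icc (0 : ℝ) 1, y + t • u ∈ Ω := fun t ht => hΩ.add_smul_sub_mem hy hx ht
  have hderiv : ∀ t ∈ Icc (0 : ℝ) 1,
      HasDerivWithinAt (fun t : ℝ => ⟪F (y + t • u), u⟫) ⟪DF (y + t • u) u, u⟫ (Icc 0 1) t := by
    intro t ht
    have hline : HasDerivWithinAt (fun t : ℝ => y + t • u) u (Icc 0 1) t := by
      simpa using (((hasDerivAt_id t).smul_const u).const_add y).hasDerivWithinAt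
    exact ((innerSL ℝ (E := E)).flip u).hasFDerivAt.comp_hasDerivWithinAt t
      ((hF _ (hL t ht)).comp_hasDerivWithinAt t hline hL)
  have h := sub_mem_Icc_of_hasDerivWithinAt_unitInterval hderiv fun t ht => hDF _ (hL t ht)
  simpa [u, ← inner_sub_left] using h

/-- QIB parameterization (Theorem 4 of the paper): if `f` is differentiable on a convex set
`Ω`, `γ̲·‖v‖² ≤ ⟪G (Df x v), v⟫ ≤ γ̄·‖v‖²` on `Ω`, and `Σ_i ‖∇ξ_i(x)‖² ≤ γ_m` on `Ω`
(where `ξ_i = (G·f)_i`), then for any `ε₁, ε₂ ≥ 0`, `f` is quadratically inner-bounded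
on `Ω` w.r.t. `G` with `γ_q1 = ε₁·γ̄ − ε₂·γ̲ + γ_m` and `γ_q2 = ε₂ − ε₁`. -/
theorem qib_parameterization
    (n g : ℕ)
    (Ω : Set (EuclideanSpace ℝ (Fin n))) (hΩ : Convex ℝ Ω)
    (f : EuclideanSpace ℝ (Fin n) → EuclideanSpace ℝ (Fin g))
    (Df : EuclideanSpace ℝ (Fin n) → (EuclideanSpace ℝ (Fin n) →L[ℝ] EuclideanSpace ℝ (Fin g)))
    (hdf : ∀ x ∈ Ω, HasFDerivWithinAt f (Df x) Ω x)
    (G : Matrix (Fin n) (Fin g) ℝ)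
    (γlo γhi : ℝ)
    (hbound : ∀ x ∈ Ω, ∀ v : EuclideanSpace ℝ (Fin n),
      γlo * ‖v‖ ^ 2 ≤ ⟪(WithLp.equiv 2 (Fin n → ℝ)).symm (G.mulVec (Df x v)), v⟫ ∧
      ⟪(WithLp.equiv 2 (Fin n → ℝ)).symm (G.mulVec (Df x v)), v⟫ ≤ γhi * ‖v‖ ^ 2)
    (γm : ℝ)
    (hgrad : ∀ x ∈ Ω,
      (∑ i : Fin n, ∑ m : Fin n,
        (∑ j : Fin g, G i j * Df x (EuclideanSpace.single m 1) j) ^ 2) ≤ γm)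
    (ε₁ ε₂ : ℝ) (hε₁ : 0 ≤ ε₁) (hε₂ : 0 ≤ ε₂) :
    ∀ x ∈ Ω, ∀ y ∈ Ω,
      ‖(WithLp.equiv 2 (Fin n → ℝ)).symm (G.mulVec (f x - f y))‖ ^ 2 ≤
        (ε₁ * γhi - ε₂ * γlo + γm) * ‖x - y‖ ^ 2 +
        (ε₂ - ε₁) * ⟪(WithLp.equiv 2 (Fin n → ℝ)).symm (G.mulVec (f x - f y)), x - y⟫ := by
  intro x hx y hy
  set M := (Matrix.toEuclideanLin G).toContinuousLinearMap
  have hF : ∀ z ∈ Ω, HasFDerivWithinAt (fun z => M (f z)) (M.comp (Df z)) Ω z := fun z hz =>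
    M.hasFDerivAt.comp_hasFDerivWithinAt z (hdf z hz)
  have hlip : ‖M (f x) - M (f y)‖ ≤ √γm * ‖x - y‖ :=
    hΩ.norm_image_sub_le_of_norm_hasFDerivWithin_le hF
      (fun z hz => (M.comp (Df z)).euclidean_opNorm_le_sqrt (hgrad z hz)) hy hx
  have hinner := hΩ.inner_sub_mem_Icc_of_hasFDerivWithinAt hF hx hy
    fun z hz => hbound z hz (x - y)
  have hγm : 0 ≤ γm := le_trans (by positivity) (hgrad x hx)
  have hsq : ‖M (f x) - M (f y)‖ ^ 2 ≤ γm * ‖x - y‖ ^ 2 := by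
    simpa [mul_pow, Real.sq_sqrt hγm] using pow_le_pow_left₀ (norm_nonneg _) hlip 2
  have hMf : (WithLp.equiv 2 (Fin n → ℝ)).symm (G.mulVec (f x - f y)) = M (f x) - M (f y) :=
    map_sub M (f x) (f y)
  rw [hMf]
  nlinarith [mul_nonneg hε₁ (sub_nonneg.2 hinner.2), mul_nonneg hε₂ (sub_nonneg.2 hinner.1)]
end

section
/- Define f : ℝ² → ℝ² by f(x) = −‖x‖²·x, and let Ω = { x ∈ ℝ² : ‖x‖ ≤ 5.9372 }. Then f is NOT quadratically inner-bounded on Ω with constants γ_q1 = −200 and γ_q2 = −141: there exist x, x̂ ∈ Ω (namely x = (1,0) and x̂ = (0,0)) such that ‖f(x) − f(x̂)‖² > γ_q1·‖x − x̂‖² + γ_q2·⟨f(x) − f(x̂), x − x̂⟩ (indeed the left-hand side equals 1 while the right-hand side equals −59). Hence the QIB conditions claimed in the literature for these constants are incorrect. -/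
open RealInnerProductSpace

/-- The function `f(x) = −‖x‖²·x` is NOT quadratically inner-bounded on
`Ω = {x : ‖x‖ ≤ 5.9372}` with constants `γ_q1 = −200`, `γ_q2 = −141`: there are points of
`Ω` violating the QIB inequality. -/
theorem qib_claim_incorrect_abbaszadeh
    (f : EuclideanSpace ℝ (Fin 2) → EuclideanSpace ℝ (Fin 2))
    (hf : ∀ x, f x = -(‖x‖ ^ 2) • x)
    (Ω : Set (EuclideanSpace ℝ (Fin 2)))
    (hΩ : Ω = {x : EuclideanSpace ℝ (Fin 2) | ‖x‖ ≤ 5.9372}) :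
    ∃ x ∈ Ω, ∃ y ∈ Ω,
      ‖f x - f y‖ ^ 2 > (-200 : ℝ) * ‖x - y‖ ^ 2 + (-141 : ℝ) * ⟪f x - f y, x - y⟫ := by
  set e : EuclideanSpace ℝ (Fin 2) := EuclideanSpace.single 0 1 with he
  have hne : ‖e‖ = 1 := by simp [he]
  subst hΩ
  refine ⟨e, by simp [hne]; norm_num, 0, by simp; norm_num, ?_⟩
  have h0 : f 0 = 0 := by simp [hf]
  have h1 : f e = -e := by rw [hf, hne]; simp
  rw [h0, h1]
  simp only [sub_zero]
  have : ⟪-e, e⟫ = -(1:ℝ) := by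
    rw [inner_neg_left, real_inner_self_eq_norm_sq, hne]; norm_num
  rw [this, norm_neg, hne]
  norm_num
end

section
/- Define f : ℝ² → ℝ² by f(x) = −‖x‖²·x, let r > 0, and let Ω = { x ∈ ℝ² : ‖x‖ ≤ r }. If f is quadratically inner-bounded on Ω with constants γ_q1, γ_q2 ∈ ℝ, then necessarily γ_q1 ≥ 0. -/
open RealInnerProductSpace

/-- Key step: for every `t ∈ (0, r]` we get `t^4 + γq2 * t^2 ≤ γq1`. -/
theorem qib_ball_gamma_q1_nonneg
    (f : EuclideanSpace ℝ (Fin 2) → EuclideanSpace ℝ (Fin 2))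
    (hf : ∀ x, f x = -(‖x‖ ^ 2) • x)
    (r : ℝ) (hr : 0 < r)
    (Ω : Set (EuclideanSpace ℝ (Fin 2)))
    (hΩ : Ω = {x : EuclideanSpace ℝ (Fin 2) | ‖x‖ ≤ r})
    (γq1 γq2 : ℝ)
    (hQIB : ∀ x ∈ Ω, ∀ y ∈ Ω,
      ‖f x - f y‖ ^ 2 ≤ γq1 * ‖x - y‖ ^ 2 + γq2 * ⟪f x - f y, x - y⟫) :
    γq1 ≥ 0 := by
  have key : ∀ t : ℝ, 0 < t → t ≤ r → t ^ 4 + γq2 * t ^ 2 ≤ γq1 := by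
    intro t ht htr
    set e : EuclideanSpace ℝ (Fin 2) := EuclideanSpace.single 0 1 with he
    have hne : ‖e‖ = 1 := by
      simp [he, EuclideanSpace.norm_single]
    set x : EuclideanSpace ℝ (Fin 2) := t • e with hx
    have hnx : ‖x‖ = t := by
      rw [hx, norm_smul, hne, mul_one, Real.norm_eq_abs, abs_of_pos ht]
    have hxΩ : x ∈ Ω := by rw [hΩ]; simp [hnx, htr]
    have hyΩ : -x ∈ Ω := by rw [hΩ]; simp [hnx, htr]
    have h := hQIB x hxΩ (-x) hyΩ
    have hfx : f x - f (-x) = (-(t ^ 2) * 2) • x := by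
      rw [hf, hf, norm_neg, hnx]
      module
    have hnxy : ‖x - -x‖ = 2 * t := by
      have h2 : x - -x = (2 : ℝ) • x := by module
      rw [h2, norm_smul, hnx, Real.norm_eq_abs, abs_two]
    have hin : ⟪x, x - -x⟫ = 2 * t ^ 2 := by
      have h2 : x - -x = (2 : ℝ) • x := by module
      rw [h2, real_inner_smul_right, real_inner_self_eq_norm_sq, hnx]
    rw [hfx, hnxy, norm_smul, real_inner_smul_left, hin, hnx,
      Real.norm_eq_abs] at h
    have habs1 : |(-(t ^ 2) * 2)| = t ^ 2 * 2 := by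
      rw [abs_mul, abs_neg, abs_pow, abs_two, sq_abs]
    rw [habs1] at h
    nlinarith [pow_pos ht 2, pow_pos ht 4, sq_nonneg t]
  by_contra hneg
  push_neg at hneg
  set c : ℝ := -γq1 with hc
  have hcpos : 0 < c := by simp [hc]; linarith
  set s : ℝ := min r (Real.sqrt (c / (2 * (|γq2| + 1)))) with hs
  have hden : 0 < 2 * (|γq2| + 1) := by positivity
  have hsqpos : 0 < Real.sqrt (c / (2 * (|γq2| + 1))) :=
    Real.sqrt_pos.mpr (by positivity)
  have hspos : 0 < s := lt_min hr hsqpos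
  have hsr : s ≤ r := min_le_left _ _
  have hssq : s ^ 2 ≤ c / (2 * (|γq2| + 1)) := by
    have h1 : s ≤ Real.sqrt (c / (2 * (|γq2| + 1))) := min_le_right _ _
    calc s ^ 2 ≤ (Real.sqrt (c / (2 * (|γq2| + 1)))) ^ 2 := by
          apply pow_le_pow_left₀ hspos.le h1
      _ = c / (2 * (|γq2| + 1)) := Real.sq_sqrt (by positivity)
  have hkey := key s hspos hsr
  -- s^2 * |γq2| ≤ c/2, so s^4 + γq2 s^2 ≥ -c/2 > -c = γq1, contradiction
  have h1 : s ^ 2 * |γq2| ≤ c / 2 := by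
    have h2 : s ^ 2 * (2 * (|γq2| + 1)) ≤ c :=
      (le_div_iff₀ hden).mp hssq
    nlinarith [sq_nonneg s, abs_nonneg γq2]
  have h2 : γq2 * s ^ 2 ≥ -(c / 2) := by
    have := neg_abs_le γq2
    nlinarith [sq_nonneg s]
  nlinarith [pow_pos hspos 4]
end

section
/- Define f : ℝ² → ℝ² by f(x) = −‖x‖²·x, let r > 0, and let Ω = { x ∈ ℝ² : ‖x‖ ≤ r }. Suppose the real constants γ_q1, γ_q2 satisfy: γ_q1 ≥ 0, γ_q2 < 0, 2r² ≤ −γ_q2/2, and r⁴ ≤ γ_q1 − γ_q2·r². Then f is quadratically inner-bounded on Ω with constants γ_q1 and γ_q2, i.e. for all x, x̂ ∈ Ω: ‖f(x) − f(x̂)‖² ≤ γ_q1·‖x − x̂‖² + γ_q2·⟨f(x) − f(x̂), x − x̂⟩. -/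
set_option maxHeartbeats 1000000


open RealInnerProductSpace

/-- Sufficient conditions for `f(x) = −‖x‖²·x` to be quadratically inner-bounded on the
ball `Ω = {x : ‖x‖ ≤ r}` (`r > 0`): if `γ_q1 ≥ 0`, `γ_q2 < 0`, `2r² ≤ −γ_q2/2`, and
`r⁴ ≤ γ_q1 − γ_q2·r²`, then `f` is QIB on `Ω` with constants `γ_q1, γ_q2`. -/
theorem qib_ball_sufficient_conditions
    (f : EuclideanSpace ℝ (Fin 2) → EuclideanSpace ℝ (Fin 2))
    (hf : ∀ x, f x = -(‖x‖ ^ 2) • x)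
    (r : ℝ) (hr : 0 < r)
    (Ω : Set (EuclideanSpace ℝ (Fin 2)))
    (hΩ : Ω = {x : EuclideanSpace ℝ (Fin 2) | ‖x‖ ≤ r})
    (γq1 γq2 : ℝ)
    (h1 : γq1 ≥ 0) (h2 : γq2 < 0)
    (h3 : 2 * r ^ 2 ≤ -γq2 / 2)
    (h4 : r ^ 4 ≤ γq1 - γq2 * r ^ 2) :
    ∀ x ∈ Ω, ∀ y ∈ Ω,
      ‖f x - f y‖ ^ 2 ≤ γq1 * ‖x - y‖ ^ 2 + γq2 * ⟪f x - f y, x - y⟫ := by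
  intro x hx y hy
  rw [hΩ] at hx hy
  have ha : ‖x‖ ≤ r := hx
  have hb : ‖y‖ ≤ r := hy
  set a := ‖x‖ with hadef
  set b := ‖y‖ with hbdef
  set p := ⟪x, y⟫ with hpdef
  have ha0 : 0 ≤ a := norm_nonneg x
  have hb0 : 0 ≤ b := norm_nonneg y
  have hpa : p ≤ a * b := real_inner_le_norm x y
  have hpb : -(a * b) ≤ p := by
    have := abs_real_inner_le_norm x y
    have := abs_le.mp this
    linarith [this.1]
  have hxx : ⟪x, x⟫ = a ^ 2 := real_inner_self_eq_norm_sq x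
  have hyy : ⟪y, y⟫ = b ^ 2 := real_inner_self_eq_norm_sq y
  have hyx : ⟪y, x⟫ = p := real_inner_comm x y
  have e1 : ‖x - y‖ ^ 2 = a ^ 2 + b ^ 2 - 2 * p := by
    rw [← real_inner_self_eq_norm_sq]
    rw [inner_sub_left, inner_sub_right, inner_sub_right, hxx, hyy, hyx, ← hpdef]
    ring
  have e2 : f x - f y = (-(a ^ 2)) • x - (-(b ^ 2)) • y := by
    rw [hf x, hf y]
  have e3 : ‖f x - f y‖ ^ 2 = a ^ 6 + b ^ 6 - 2 * a ^ 2 * b ^ 2 * p := by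
    rw [e2, ← real_inner_self_eq_norm_sq]
    simp only [inner_sub_left, inner_sub_right, inner_smul_left, inner_smul_right,
      hxx, hyy, hyx, ← hpdef, RCLike.star_def, starRingEnd_apply, star_trivial]
    ring
  have e4 : ⟪f x - f y, x - y⟫ = -(a ^ 4 + b ^ 4) + (a ^ 2 + b ^ 2) * p := by
    rw [e2]
    simp only [inner_sub_left, inner_sub_right, inner_smul_left,
      hxx, hyy, hyx, ← hpdef, RCLike.star_def, starRingEnd_apply, star_trivial]
    ring
  rw [e1, e3, e4]
  have hc : 4 * r ^ 2 ≤ -γq2 := by linarith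
  have hK : 0 ≤ -2 * a ^ 2 * b ^ 2 + 2 * γq1 + (-γq2) * (a ^ 2 + b ^ 2) := by
    nlinarith [sq_nonneg (a - b), sq_nonneg (a + b), mul_nonneg ha0 hb0,
      mul_nonneg (mul_nonneg ha0 hb0) (mul_nonneg ha0 hb0),
      sq_nonneg (a * b), sq_nonneg (r * r - a * b),
      mul_nonneg (mul_nonneg ha0 hb0) (sq_nonneg (a - b)),
      mul_le_mul ha hb hb0 (le_of_lt hr)]
  have hM : (a - b) ^ 2 * ((a ^ 2 + a * b + b ^ 2) ^ 2 - γq1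
      - (-γq2) * (a ^ 2 + a * b + b ^ 2)) ≤ 0 := by
    have ht0 : 0 ≤ a ^ 2 + a * b + b ^ 2 := by nlinarith [sq_nonneg (a + b)]
    have ht : a ^ 2 + a * b + b ^ 2 ≤ 3 * r ^ 2 := by
      nlinarith [mul_le_mul ha hb hb0 (le_of_lt hr), sq_nonneg a, sq_nonneg b]
    have hfac : (a ^ 2 + a * b + b ^ 2) ^ 2 - γq1
        - (-γq2) * (a ^ 2 + a * b + b ^ 2) ≤ 0 := by
      nlinarith [mul_nonneg ht0 (by linarith : (0:ℝ) ≤ -γq2 - (a ^ 2 + a * b + b ^ 2))]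
    exact mul_nonpos_of_nonneg_of_nonpos (sq_nonneg _) hfac
  nlinarith [mul_nonneg hK (by linarith : (0:ℝ) ≤ a * b - p), hM]
end
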